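/- If P is a finite-dimensional Poisson algebra with solvable radical R (the largest solvable Poisson ideal), then R_A^2 = R·R (the associative square of R) is a nilpotent Poisson ideal, i.e., R_A^2 is contained in the nilradical of P. -/

import Mathlib

/-!
Associativity gives `R_A^{2^k} ⊆ R^{(k)}`, so the solvable radical is associatively nilpotent.
By the Leibniz rule every associative power `R_A^n` is stable under `[·, R]`, hence
`[R_A^n, R·R] ⊆ R_A^{n+1}`; together with `R_A^n·(R·R) = R_A^{n+2}` this pushes the lower
central series of `R·R` down the associative powers of `R`, so it reaches `0`.
-/

/-!  Framework: dialgebras and Poisson algebras as bilinear structures on a module. -/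

variable {F P : Type*} [Field F] [AddCommGroup P] [Module F P]

/-- A dialgebra: a vector space with two bilinear multiplications. -/
structure Dialgebra (F P : Type*) [Field F] [AddCommGroup P] [Module F P] where
  mul : P →ₗ[F] P →ₗ[F] P
  bracket : P →ₗ[F] P →ₗ[F] P

namespace Dialgebra

variable (D : Dialgebra F P)

/-- Span of the set of products `a·b`, `a ∈ A`, `b ∈ B`. -/
def pmul (A B : Submodule F P) : Submodule F P :=
  Submodule.span F (Set.image2 (fun a b => D.mul a b) (A : Set P) (B : Set P))

/-- Span of the set of brackets `[a,b]`, `a ∈ A`, `b ∈ B`. -/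
def pbra (A B : Submodule F P) : Submodule F P :=
  Submodule.span F (Set.image2 (fun a b => D.bracket a b) (A : Set P) (B : Set P))

/-- `A·B + [A,B]`. -/
def psq (A B : Submodule F P) : Submodule F P := D.pmul A B ⊔ D.pbra A B

/-- A subalgebra: a subspace closed under both products. -/
def IsSubalgebra (A : Submodule F P) : Prop := D.psq A A ≤ A

/-- An ideal of the dialgebra. -/
def IsIdeal (A : Submodule F P) : Prop :=
  D.pmul A ⊤ ≤ A ∧ D.pmul ⊤ A ≤ A ∧ D.pbra A ⊤ ≤ A ∧ D.pbra ⊤ A ≤ A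

/-- `A` is an ideal of the subalgebra `U`. -/
def IsIdealIn (A U : Submodule F P) : Prop :=
  A ≤ U ∧ D.pmul A U ≤ A ∧ D.pmul U A ≤ A ∧ D.pbra A U ≤ A ∧ D.pbra U A ≤ A

/-- Lower central series of `B`: `B^1 = B`, `B^{n+1} = B^n·B + [B^n,B]`. -/
def lcs (B : Submodule F P) : ℕ → Submodule F P
  | 0 => B
  | n + 1 => D.psq (lcs B n) B

/-- `B` is nilpotent as a dialgebra. -/
def IsNilpotentSub (B : Submodule F P) : Prop := ∃ n, D.lcs B n = ⊥

/-- Derived series of `B`. -/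
def ders (B : Submodule F P) : ℕ → Submodule F P
  | 0 => B
  | n + 1 => D.psq (ders B n) (ders B n)

/-- `B` is solvable as a dialgebra. -/
def IsSolvableSub (B : Submodule F P) : Prop := ∃ n, D.ders B n = ⊥

/-- Associative powers: `apow B n = B_A^{n+1}`, i.e. `apow B 0 = B_A^1 = B`. -/
def apow (B : Submodule F P) : ℕ → Submodule F P
  | 0 => B
  | n + 1 => D.pmul (apow B n) B

/-- Lie powers: `lpow B n = B_L^{n+1}`. -/
def lpow (B : Submodule F P) : ℕ → Submodule F P
  | 0 => B
  | n + 1 => D.pbra (lpow B n) B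

/-- Associative nilpotency of `B`. -/
def AssocNilpotent (B : Submodule F P) : Prop := ∃ n, D.apow B n = ⊥

/-- Lie nilpotency of `B`. -/
def LieNilpotent (B : Submodule F P) : Prop := ∃ n, D.lpow B n = ⊥

/-- `mulPows B X n = X·B_A^n` (with the convention that it is `X` for `n = 0`). -/
def mulPows (B X : Submodule F P) : ℕ → Submodule F P
  | 0 => X
  | n + 1 => D.pmul (mulPows B X n) B

/-- `M` is a maximal (proper) subalgebra of the subalgebra `U`. -/
def IsMaximalSubalgebraIn (U M : Submodule F P) : Prop :=
  D.IsSubalgebra M ∧ M < U ∧ ∀ K, D.IsSubalgebra K → M ≤ K → K ≤ U → K = M ∨ K = U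

/-- Frattini subalgebra of the subalgebra `U`: intersection of its maximal subalgebras. -/
def frattiniIn (U : Submodule F P) : Submodule F P :=
  U ⊓ sInf {M | D.IsMaximalSubalgebraIn U M}

/-- Frattini ideal of the subalgebra `U`: largest ideal of `U` inside `frattiniIn U`. -/
def phiIn (U : Submodule F P) : Submodule F P :=
  sSup {I | D.IsIdealIn I U ∧ I ≤ D.frattiniIn U}

/-- Frattini subalgebra of the dialgebra. -/
def frattini : Submodule F P := D.frattiniIn ⊤

/-- Frattini ideal of the dialgebra. -/
def phi : Submodule F P := sSup {I | D.IsIdeal I ∧ I ≤ D.frattini}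

/-- Minimal ideal. -/
def IsMinimalIdeal (A : Submodule F P) : Prop :=
  D.IsIdeal A ∧ A ≠ ⊥ ∧ ∀ I, D.IsIdeal I → I ≤ A → I = ⊥ ∨ I = A

/-- Zero (trivial-multiplication) subspace. -/
def IsZeroAlg (A : Submodule F P) : Prop := D.pmul A A = ⊥ ∧ D.pbra A A = ⊥

/-- Zero socle: sum of the minimal zero ideals. -/
def zsoc : Submodule F P := sSup {A | D.IsMinimalIdeal A ∧ D.IsZeroAlg A}

/-- Socle: sum of the minimal ideals. -/
def soc : Submodule F P := sSup {A | D.IsMinimalIdeal A}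

/-- Annihilator of `B` in the algebra. -/
def annih (B : Submodule F P) : Submodule F P where
  carrier := {x | ∀ b ∈ B, D.mul x b = 0 ∧ D.bracket x b = 0}
  add_mem' := by
    intro x y hx hy b hb
    have h1 := hx b hb; have h2 := hy b hb
    constructor <;> simp [map_add, LinearMap.add_apply, h1.1, h1.2, h2.1, h2.2]
  zero_mem' := by intro b hb; simp
  smul_mem' := by
    intro c x hx b hb
    have h := hx b hb
    constructor <;> simp [map_smul, LinearMap.smul_apply, h.1, h.2]

/-- `R` is the solvable radical: the largest solvable ideal. -/
def IsRadical (R : Submodule F P) : Prop :=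
  D.IsIdeal R ∧ D.IsSolvableSub R ∧ ∀ I, D.IsIdeal I → D.IsSolvableSub I → I ≤ R

/-- `N` is the nilradical: the largest nilpotent ideal. -/
def IsNilradical (N : Submodule F P) : Prop :=
  D.IsIdeal N ∧ D.IsNilpotentSub N ∧ ∀ I, D.IsIdeal I → D.IsNilpotentSub I → I ≤ N

end Dialgebra

/-- A Poisson algebra: commutative associative product and Lie bracket linked by the Leibniz rule. -/
structure PoissonAlgebra (F P : Type*) [Field F] [AddCommGroup P] [Module F P]
    extends Dialgebra F P where
  mul_comm : ∀ x y, mul x y = mul y x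
  mul_assoc : ∀ x y z, mul (mul x y) z = mul x (mul y z)
  lie_self : ∀ x, bracket x x = 0
  leibniz_lie : ∀ x y z, bracket x (bracket y z) = bracket (bracket x y) z + bracket y (bracket x z)
  leibniz : ∀ x y z, bracket (mul x y) z = mul (bracket x z) y + mul x (bracket y z)

namespace Submodule

variable {R M₁ M₂ M₃ P₁ P₂ : Type*} [CommSemiring R] [AddCommMonoid M₁] [AddCommMonoid M₂]
  [AddCommMonoid M₃] [AddCommMonoid P₁] [AddCommMonoid P₂] [Module R M₁] [Module R M₂]
  [Module R M₃] [Module R P₁] [Module R P₂]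

theorem map₂_map₂_left_le {f : P₁ →ₗ[R] M₃ →ₗ[R] P₂} {g : M₁ →ₗ[R] M₂ →ₗ[R] P₁}
    {A : Submodule R M₁} {B : Submodule R M₂} {C : Submodule R M₃} {X : Submodule R P₂}
    (h : ∀ a ∈ A, ∀ b ∈ B, ∀ c ∈ C, f (g a b) c ∈ X) : map₂ f (map₂ g A B) C ≤ X :=
  map₂_le.2 fun _ hx c hc =>
    (map₂_le (r := X.comap (f.flip c))).2 (fun a ha b hb => h a ha b hb c hc) hx

theorem map₂_map₂_right_le {f : M₁ →ₗ[R] P₁ →ₗ[R] P₂} {g : M₂ →ₗ[R] M₃ →ₗ[R] P₁}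
    {A : Submodule R M₁} {B : Submodule R M₂} {C : Submodule R M₃} {X : Submodule R P₂}
    (h : ∀ a ∈ A, ∀ b ∈ B, ∀ c ∈ C, f a (g b c) ∈ X) : map₂ f A (map₂ g B C) ≤ X :=
  map₂_le.2 fun a ha _ hx =>
    (map₂_le (r := X.comap (f a))).2 (fun b hb c hc => h a ha b hb c hc) hx

end Submodule

namespace Dialgebra

variable (D : Dialgebra F P) {A A' B B' C : Submodule F P}

theorem pmul_eq_map₂ (A B : Submodule F P) : D.pmul A B = Submodule.map₂ D.mul A B :=
  (Submodule.map₂_eq_span_image2 _ _ _).symm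

theorem pbra_eq_map₂ (A B : Submodule F P) : D.pbra A B = Submodule.map₂ D.bracket A B :=
  (Submodule.map₂_eq_span_image2 _ _ _).symm

theorem mul_mem_pmul {a b : P} (ha : a ∈ A) (hb : b ∈ B) : D.mul a b ∈ D.pmul A B :=
  Submodule.subset_span (Set.mem_image2_of_mem ha hb)

theorem bracket_mem_pbra {a b : P} (ha : a ∈ A) (hb : b ∈ B) :
    D.bracket a b ∈ D.pbra A B :=
  Submodule.subset_span (Set.mem_image2_of_mem ha hb)

theorem pmul_le_iff : D.pmul A B ≤ C ↔ ∀ a ∈ A, ∀ b ∈ B, D.mul a b ∈ C := by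
  rw [pmul_eq_map₂, Submodule.map₂_le]

theorem pbra_le_iff : D.pbra A B ≤ C ↔ ∀ a ∈ A, ∀ b ∈ B, D.bracket a b ∈ C := by
  rw [pbra_eq_map₂, Submodule.map₂_le]

theorem pmul_mono (hA : A ≤ A') (hB : B ≤ B') : D.pmul A B ≤ D.pmul A' B' :=
  Submodule.span_mono (Set.image2_subset hA hB)

theorem pbra_mono (hA : A ≤ A') (hB : B ≤ B') : D.pbra A B ≤ D.pbra A' B' :=
  Submodule.span_mono (Set.image2_subset hA hB)

theorem IsIdeal.pmul_self_le {I : Submodule F P} (hI : D.IsIdeal I) : D.pmul I I ≤ I :=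
  (D.pmul_mono le_rfl le_top).trans hI.1

theorem IsIdeal.pbra_self_le {I : Submodule F P} (hI : D.IsIdeal I) : D.pbra I I ≤ I :=
  (D.pbra_mono le_rfl le_top).trans hI.2.2.1

end Dialgebra

namespace PoissonAlgebra

variable (Q : PoissonAlgebra F P)

theorem bracket_skew (a b : P) : Q.bracket a b = -Q.bracket b a := by
  have h := Q.lie_self (a + b)
  simp only [map_add, LinearMap.add_apply, Q.lie_self a, Q.lie_self b, zero_add, add_zero] at h
  exact eq_neg_of_add_eq_zero_right h

theorem pmul_comm (A B : Submodule F P) : Q.pmul A B = Q.pmul B A := by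
  refine le_antisymm ?_ ?_ <;>
  · rw [Dialgebra.pmul_le_iff]
    intro a ha b hb
    rw [Q.mul_comm]
    exact Q.mul_mem_pmul hb ha

theorem pbra_comm (A B : Submodule F P) : Q.pbra A B = Q.pbra B A := by
  refine le_antisymm ?_ ?_ <;>
  · rw [Dialgebra.pbra_le_iff]
    intro a ha b hb
    rw [Q.bracket_skew]
    exact neg_mem (Q.bracket_mem_pbra hb ha)

theorem pmul_assoc (A B C : Submodule F P) :
    Q.pmul (Q.pmul A B) C = Q.pmul A (Q.pmul B C) := by
  simp only [Dialgebra.pmul_eq_map₂]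
  apply le_antisymm
  · refine Submodule.map₂_map₂_left_le fun a ha b hb c hc => ?_
    rw [Q.mul_assoc, ← Dialgebra.pmul_eq_map₂, ← Dialgebra.pmul_eq_map₂]
    exact Q.mul_mem_pmul ha (Q.mul_mem_pmul hb hc)
  · refine Submodule.map₂_map₂_right_le fun a ha b hb c hc => ?_
    rw [← Q.mul_assoc, ← Dialgebra.pmul_eq_map₂, ← Dialgebra.pmul_eq_map₂]
    exact Q.mul_mem_pmul (Q.mul_mem_pmul ha hb) hc

theorem pbra_pmul_le (A B C : Submodule F P) :
    Q.pbra (Q.pmul A B) C ≤ Q.pmul (Q.pbra A C) B ⊔ Q.pmul A (Q.pbra B C) := by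
  rw [Dialgebra.pbra_eq_map₂, Dialgebra.pmul_eq_map₂]
  refine Submodule.map₂_map₂_left_le fun a ha b hb c hc => ?_
  rw [Q.leibniz]
  exact add_mem (Submodule.mem_sup_left (Q.mul_mem_pmul (Q.bracket_mem_pbra ha hc) hb))
    (Submodule.mem_sup_right (Q.mul_mem_pmul ha (Q.bracket_mem_pbra hb hc)))

theorem isIdeal_pmul {I J : Submodule F P} (hI : Q.IsIdeal I) (hJ : Q.IsIdeal J) :
    Q.IsIdeal (Q.pmul I J) := by
  have hmul : Q.pmul (Q.pmul I J) ⊤ ≤ Q.pmul I J := by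
    rw [Q.pmul_assoc]
    exact Q.pmul_mono le_rfl hJ.1
  have hbra : Q.pbra (Q.pmul I J) ⊤ ≤ Q.pmul I J :=
    (Q.pbra_pmul_le I J ⊤).trans
      (sup_le (Q.pmul_mono hI.2.2.1 le_rfl) (Q.pmul_mono le_rfl hJ.2.2.1))
  refine ⟨hmul, ?_, hbra, ?_⟩
  · rwa [Q.pmul_comm]
  · rwa [Q.pbra_comm]

theorem apow_add_succ (B : Submodule F P) (m : ℕ) :
    ∀ n, Q.apow B (m + n + 1) = Q.pmul (Q.apow B m) (Q.apow B n)
  | 0 => rfl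
  | n + 1 => by
    change Q.pmul (Q.apow B (m + n + 1)) B = _
    rw [apow_add_succ B m n, Q.pmul_assoc]
    rfl

theorem apow_two_pow_sub_one_le_ders (B : Submodule F P) :
    ∀ k, Q.apow B (2 ^ k - 1) ≤ Q.ders B k
  | 0 => le_rfl
  | k + 1 => by
    have hexp : 2 ^ (k + 1) - 1 = (2 ^ k - 1) + (2 ^ k - 1) + 1 := by
      have := Nat.one_le_two_pow (n := k); omega
    rw [hexp, Q.apow_add_succ]
    have ih := apow_two_pow_sub_one_le_ders B k
    exact (Q.pmul_mono ih ih).trans le_sup_left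

theorem assocNilpotent_of_isSolvableSub {B : Submodule F P} (hB : Q.IsSolvableSub B) :
    Q.AssocNilpotent B :=
  let ⟨k, hk⟩ := hB
  ⟨2 ^ k - 1, le_bot_iff.1 (hk ▸ Q.apow_two_pow_sub_one_le_ders B k)⟩

theorem apow_succ_le {B : Submodule F P} (hmul : Q.pmul B B ≤ B) :
    ∀ n, Q.apow B (n + 1) ≤ Q.apow B n
  | 0 => hmul
  | n + 1 => Q.pmul_mono (apow_succ_le hmul n) le_rfl

theorem pbra_apow_le {B : Submodule F P} (hbra : Q.pbra B B ≤ B) :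
    ∀ n, Q.pbra (Q.apow B n) B ≤ Q.apow B n
  | 0 => hbra
  | n + 1 => (Q.pbra_pmul_le _ _ _).trans
      (sup_le (Q.pmul_mono (pbra_apow_le hbra n) le_rfl) (Q.pmul_mono le_rfl hbra))

theorem lcs_pmul_self_le_apow {B : Submodule F P} (hmul : Q.pmul B B ≤ B)
    (hbra : Q.pbra B B ≤ B) : ∀ n, Q.lcs (Q.pmul B B) n ≤ Q.apow B (n + 1)
  | 0 => le_rfl
  | n + 1 => by
    have ih := lcs_pmul_self_le_apow hmul hbra n
    have hbra' : Q.pbra B (Q.apow B (n + 1)) ≤ Q.apow B (n + 1) := by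
      rw [Q.pbra_comm]
      exact Q.pbra_apow_le hbra (n + 1)
    refine sup_le ?_ ?_
    · calc Q.pmul (Q.lcs (Q.pmul B B) n) (Q.pmul B B)
          ≤ Q.pmul (Q.apow B (n + 1)) (Q.pmul B B) := Q.pmul_mono ih le_rfl
        _ = Q.apow B (n + 3) := (Q.pmul_assoc _ _ _).symm
        _ ≤ Q.apow B (n + 2) := Q.apow_succ_le hmul _
    · calc Q.pbra (Q.lcs (Q.pmul B B) n) (Q.pmul B B)
          ≤ Q.pbra (Q.pmul B B) (Q.apow B (n + 1)) := by
            rw [Q.pbra_comm (Q.pmul B B)]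
            exact Q.pbra_mono ih le_rfl
        _ ≤ Q.pmul (Q.pbra B (Q.apow B (n + 1))) B ⊔ Q.pmul B (Q.pbra B (Q.apow B (n + 1))) :=
            Q.pbra_pmul_le _ _ _
        _ ≤ Q.apow B (n + 2) := by
            rw [Q.pmul_comm B]
            exact sup_le (Q.pmul_mono hbra' le_rfl) (Q.pmul_mono hbra' le_rfl)

theorem isNilpotentSub_pmul_self {B : Submodule F P} (hmul : Q.pmul B B ≤ B)
    (hbra : Q.pbra B B ≤ B) (hB : Q.AssocNilpotent B) : Q.IsNilpotentSub (Q.pmul B B) :=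
  let ⟨n, hn⟩ := hB
  ⟨n, le_bot_iff.1 (hn ▸ (Q.lcs_pmul_self_le_apow hmul hbra n).trans (Q.apow_succ_le hmul n))⟩

end PoissonAlgebra

theorem radical_assoc_square_nilpotent_general {F P : Type*} [Field F] [AddCommGroup P] [Module F P]
    (Q : PoissonAlgebra F P) (R N : Submodule F P)
    (hR : Q.toDialgebra.IsRadical R) (hN : Q.toDialgebra.IsNilradical N) :
    Q.toDialgebra.IsIdeal (Q.toDialgebra.pmul R R) ∧
    Q.toDialgebra.IsNilpotentSub (Q.toDialgebra.pmul R R) ∧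
    Q.toDialgebra.pmul R R ≤ N := by
  obtain ⟨hRideal, hRsolv, -⟩ := hR
  have hideal := Q.isIdeal_pmul hRideal hRideal
  have hnil := Q.isNilpotentSub_pmul_self hRideal.pmul_self_le hRideal.pbra_self_le
    (Q.assocNilpotent_of_isSolvableSub hRsolv)
  exact ⟨hideal, hnil, hN.2.2 _ hideal hnil⟩

/-- If `R` is the solvable radical, then `R_A^2 = R·R` is a nilpotent Poisson ideal,
contained in the nilradical. -/
theorem radical_assoc_square_nilpotent {F P : Type*} [Field F] [AddCommGroup P] [Module F P]
    [FiniteDimensional F P] (Q : PoissonAlgebra F P) (R N : Submodule F P)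
    (hR : Q.toDialgebra.IsRadical R) (hN : Q.toDialgebra.IsNilradical N) :
    Q.toDialgebra.IsIdeal (Q.toDialgebra.pmul R R) ∧
    Q.toDialgebra.IsNilpotentSub (Q.toDialgebra.pmul R R) ∧
    Q.toDialgebra.pmul R R ≤ N :=
  radical_assoc_square_nilpotent_general Q R N hR hN
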